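/- Let λ, d > 0, P(x, S) = 2dλ − x³ + xS, S* the unique positive solution of P(x, x) = 0, R = {(x, S) ∈ ℝ²_{≥0} : S ≤ x, P(x, S) ≥ 0}, and suppose η < min{2/(3(S*+1)²), 2/max_{(x,S)∈R} P(x, S)}. Define x_0 = S_0 = 0, x_{t+1} = x_t + (η/2) P(x_t, S_t), S_{t+1} = S_t + (η²/4) P(x_t, S_t)². Then the increasing bounded sequence (S_t) converges to some S_∞ ≥ 0, and x_t converges to ℓ_{S_∞}, the unique positive root of P(·, S_∞). -/

import Mathlib

/-!
With `c = 2dλ`, the region `R` is forward invariant under the iteration. If `(x, S) ∈ R` and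
`L = ℓ_S`, then `P(x, S) = (x - L)(S - (x² + xL + L²))`, so `x` lies below the root `L`, which
itself is at most `S*`; the step-size bound `3η(S*)² ≤ 2` keeps `x_{t+1}` below `L`, and the
bound `η P ≤ 2` makes the increment of `S` at most that of `x`. Inside `R` both sequences are
nondecreasing and bounded by `S*`, so they converge, and `x_{t+1} - x_t = (η/2) P(x_t, S_t)`
forces the limit to be a root of `P`, which is positive since `P(0, S) = c > 0`.
-/

open Filter Topology

namespace CubicStep

def cubic (c x S : ℝ) : ℝ := c - x ^ 3 + x * S

def region (c : ℝ) : Set (ℝ × ℝ) :=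
  {p | 0 ≤ p.1 ∧ 0 ≤ p.2 ∧ p.2 ≤ p.1 ∧ 0 ≤ cubic c p.1 p.2}

variable {c x S L : ℝ}

theorem cubic_eq_mul_of_root (hL : cubic c L S = 0) :
    cubic c x S = (x - L) * (S - (x ^ 2 + x * L + L ^ 2)) := by
  unfold cubic at *
  linear_combination hL

theorem lt_sq_of_root (hc : 0 < c) (hL0 : 0 < L) (hL : cubic c L S = 0) : S < L ^ 2 := by
  unfold cubic at hL
  nlinarith

theorem cubic_nonneg_iff_le_root (hc : 0 < c) (hL0 : 0 < L) (hL : cubic c L S = 0)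
    (hx : 0 ≤ x) : 0 ≤ cubic c x S ↔ x ≤ L := by
  have hSL := lt_sq_of_root hc hL0 hL
  rw [cubic_eq_mul_of_root hL]
  constructor
  · intro h
    by_contra! hLx
    have : 0 < x ^ 2 + x * L + L ^ 2 - S := by nlinarith
    nlinarith [mul_pos (sub_pos.2 hLx) this]
  · intro h
    have : S - (x ^ 2 + x * L + L ^ 2) ≤ 0 := by nlinarith [mul_nonneg hx hL0.le]
    exact mul_nonneg_of_nonpos_of_nonpos (sub_nonpos.2 h) this

theorem one_lt_of_fixedPoint {Sstar : ℝ} (hc : 0 < c) (hroot : cubic c Sstar Sstar = 0) :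
    1 < Sstar := by
  unfold cubic at hroot
  nlinarith [sq_nonneg Sstar]

/-- As `S ≤ x`, `P(x, S) ≤ c - (x³ - x²)`, and `x ↦ x³ - x²` increases beyond `S* > 1`. -/
theorem fst_le_of_mem_region {Sstar : ℝ} (hc : 0 < c) (hroot : cubic c Sstar Sstar = 0)
    {p : ℝ × ℝ} (hp : p ∈ region c) : p.1 ≤ Sstar := by
  obtain ⟨-, hS0, hSx, hP⟩ := hp
  have h1 := one_lt_of_fixedPoint hc hroot
  unfold cubic at hP hroot
  by_contra! h
  nlinarith [mul_le_mul_of_nonneg_left hSx (hS0.trans hSx),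
    mul_pos (sub_pos.2 h) (one_pos.trans h1), mul_pos (sub_pos.2 h) (sub_pos.2 h),
    mul_pos (sub_pos.2 h) (sub_pos.2 h1)]

theorem step_le_root {η : ℝ} (hL : cubic c L S = 0) (hxL : x ≤ L)
    (hη : η / 2 * (x ^ 2 + x * L + L ^ 2 - S) ≤ 1) : x + η / 2 * cubic c x S ≤ L := by
  have : x + η / 2 * cubic c x S - L = (x - L) * (1 - η / 2 * (x ^ 2 + x * L + L ^ 2 - S)) := by
    rw [cubic_eq_mul_of_root hL]; ring
  nlinarith [mul_nonpos_of_nonpos_of_nonneg (sub_nonpos.2 hxL) (sub_nonneg.2 hη)]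

theorem step_mem_region {η Sstar : ℝ} (hc : 0 < c) (hη : 0 ≤ η)
    (hroot : cubic c Sstar Sstar = 0) (hηSstar : 3 * η * Sstar ^ 2 ≤ 2)
    (hL0 : 0 < L) (hL : cubic c L S = 0) (hxS : (x, S) ∈ region c)
    (hηP : η * cubic c x S ≤ 2) :
    (x + η / 2 * cubic c x S, S + η ^ 2 / 4 * cubic c x S ^ 2) ∈ region c := by
  obtain ⟨hx0, hS0, hSx, hP⟩ := hxS
  set p := cubic c x S
  have hxL : x ≤ L := (cubic_nonneg_iff_le_root hc hL0 hL hx0).1 hP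
  have hLSstar : L ≤ Sstar :=
    fst_le_of_mem_region (p := (L, S)) hc hroot ⟨hL0.le, hS0, hSx.trans hxL, hL.ge⟩
  have hSstar : 0 < Sstar := one_pos.trans (one_lt_of_fixedPoint hc hroot)
  have hxSstar : x ≤ Sstar := hxL.trans hLSstar
  have hx'x : x ≤ x + η / 2 * p := le_add_of_nonneg_right (by positivity)
  have hx'L : x + η / 2 * p ≤ L := step_le_root hL hxL (by
    nlinarith [mul_le_mul hxSstar hLSstar hL0.le hSstar.le,
      mul_le_mul hxSstar hxSstar hx0 hSstar.le, mul_le_mul hLSstar hLSstar hL0.le hSstar.le])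
  have hP' : 0 ≤ cubic c (x + η / 2 * p) S :=
    (cubic_nonneg_iff_le_root hc hL0 hL (hx0.trans hx'x)).2 hx'L
  have hincr : η ^ 2 / 4 * p ^ 2 ≤ η / 2 * p := by
    have : η / 2 * p ≤ 1 := by linarith
    nlinarith [mul_nonneg (by positivity : 0 ≤ η / 2 * p) (sub_nonneg.2 this)]
  refine ⟨hx0.trans hx'x, by positivity, by linarith, ?_⟩
  have : cubic c (x + η / 2 * p) (S + η ^ 2 / 4 * p ^ 2)
      = cubic c (x + η / 2 * p) S + (x + η / 2 * p) * (η ^ 2 / 4 * p ^ 2) := by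
    unfold cubic; ring
  rw [this]
  have := mul_nonneg (hx0.trans hx'x) (by positivity : 0 ≤ η ^ 2 / 4 * p ^ 2)
  linarith

theorem orbit_mem_region {η Sstar : ℝ} {ℓ : ℝ → ℝ} {x S : ℕ → ℝ} (hc : 0 < c)
    (hη : 0 ≤ η) (hroot : cubic c Sstar Sstar = 0) (hηSstar : 3 * η * Sstar ^ 2 ≤ 2)
    (hℓpos : ∀ s, 0 ≤ s → 0 < ℓ s) (hℓroot : ∀ s, 0 ≤ s → cubic c (ℓ s) s = 0)
    (hηP : ∀ p ∈ region c, η * cubic c p.1 p.2 ≤ 2) (hx0 : x 0 = 0) (hS0 : S 0 = 0)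
    (hx : ∀ t, x (t + 1) = x t + η / 2 * cubic c (x t) (S t))
    (hS : ∀ t, S (t + 1) = S t + η ^ 2 / 4 * cubic c (x t) (S t) ^ 2) :
    ∀ t, (x t, S t) ∈ region c := by
  intro t
  induction t with
  | zero => rw [hx0, hS0]; exact ⟨le_rfl, le_rfl, le_rfl, by norm_num [cubic, hc.le]⟩
  | succ t ih =>
    rw [hx, hS]
    exact step_mem_region hc hη hroot hηSstar (hℓpos _ ih.2.1) (hℓroot _ ih.2.1) ih
      (hηP _ ih)

theorem tendsto_zero_of_succ_eq_add_mul {u v : ℕ → ℝ} {κ a : ℝ} (hκ : κ ≠ 0)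
    (hu : Tendsto u atTop (𝓝 a)) (h : ∀ t, u (t + 1) = u t + κ * v t) :
    Tendsto v atTop (𝓝 0) := by
  have hv : v = fun t => κ⁻¹ * (u (t + 1) - u t) := by
    funext t; rw [h t]; field_simp; ring
  have := ((hu.comp (tendsto_add_atTop_nat 1)).sub hu).const_mul κ⁻¹
  rw [sub_self, mul_zero] at this
  rwa [hv]

theorem exists_root_limit_of_orbit_mem_region {η Sstar : ℝ} {x S : ℕ → ℝ} (hc : 0 < c)
    (hη : 0 < η) (hroot : cubic c Sstar Sstar = 0) (hR : ∀ t, (x t, S t) ∈ region c)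
    (hx : ∀ t, x (t + 1) = x t + η / 2 * cubic c (x t) (S t))
    (hS : ∀ t, S (t + 1) = S t + η ^ 2 / 4 * cubic c (x t) (S t) ^ 2) :
    ∃ a b, 0 < a ∧ 0 ≤ b ∧ cubic c a b = 0 ∧
      Tendsto x atTop (𝓝 a) ∧ Tendsto S atTop (𝓝 b) := by
  have hS_mono : Monotone S := monotone_nat_of_le_succ fun t => by
    rw [hS t]; exact le_add_of_nonneg_right (by positivity)
  have hx_mono : Monotone x := monotone_nat_of_le_succ fun t => by
    rw [hx t]; exact le_add_of_nonneg_right (mul_nonneg (by positivity) (hR t).2.2.2)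
  have hx_le t : x t ≤ Sstar := fst_le_of_mem_region hc hroot (hR t)
  have hx_lim := tendsto_atTop_ciSup hx_mono ⟨Sstar, by rintro _ ⟨t, rfl⟩; exact hx_le t⟩
  have hS_lim := tendsto_atTop_ciSup hS_mono ⟨Sstar, by
    rintro _ ⟨t, rfl⟩; exact (hR t).2.2.1.trans (hx_le t)⟩
  have hroot_lim : cubic c (⨆ t, x t) (⨆ t, S t) = 0 :=
    tendsto_nhds_unique ((tendsto_const_nhds.sub (hx_lim.pow 3)).add (hx_lim.mul hS_lim))
      (tendsto_zero_of_succ_eq_add_mul (by positivity) hx_lim hx)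
  refine ⟨_, _, (ge_of_tendsto' hx_lim fun t => (hR t).1).lt_of_ne ?_,
    ge_of_tendsto' hS_lim fun t => (hR t).2.1, hroot_lim, hx_lim, hS_lim⟩
  intro h
  rw [← h, cubic] at hroot_lim
  linarith

end CubicStep

open CubicStep

theorem stmt_13_general (lam d η : ℝ) (hlam : 0 < lam) (hd : 0 < d) (hη : 0 < η)
    (Sstar : ℝ)
    (hSstarroot : 2 * d * lam - Sstar ^ 3 + Sstar * Sstar = 0)
    (Pmax : ℝ)
    (hPmax : IsGreatest ((fun p : ℝ × ℝ => 2 * d * lam - p.1 ^ 3 + p.1 * p.2) ''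
      {p : ℝ × ℝ | 0 ≤ p.1 ∧ 0 ≤ p.2 ∧ p.2 ≤ p.1 ∧
        0 ≤ 2 * d * lam - p.1 ^ 3 + p.1 * p.2}) Pmax)
    (hηbound : η < min (2 / (3 * (Sstar + 1) ^ 2)) (2 / Pmax))
    (ℓ : ℝ → ℝ)
    (hℓpos : ∀ s, 0 ≤ s → 0 < ℓ s)
    (hℓroot : ∀ s, 0 ≤ s → 2 * d * lam - (ℓ s) ^ 3 + ℓ s * s = 0)
    (hℓuniq : ∀ s, 0 ≤ s → ∀ z, 0 < z → 2 * d * lam - z ^ 3 + z * s = 0 → z = ℓ s)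
    (x S : ℕ → ℝ) (hx0 : x 0 = 0) (hS0 : S 0 = 0)
    (hx : ∀ t, x (t + 1) = x t + (η / 2) * (2 * d * lam - (x t) ^ 3 + x t * S t))
    (hS : ∀ t, S (t + 1) = S t + (η ^ 2 / 4) * (2 * d * lam - (x t) ^ 3 + x t * S t) ^ 2) :
    ∃ Sinf : ℝ, 0 ≤ Sinf ∧ Filter.Tendsto S Filter.atTop (nhds Sinf) ∧
      Filter.Tendsto x Filter.atTop (nhds (ℓ Sinf)) := by
  have hc : 0 < 2 * d * lam := by positivity
  obtain ⟨hη₁, hη₂⟩ := lt_min_iff.1 hηbound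
  have hSstar : 1 < Sstar := one_lt_of_fixedPoint hc hSstarroot
  have hηSstar : 3 * η * Sstar ^ 2 ≤ 2 := by
    nlinarith [(lt_div_iff₀ (by positivity)).1 hη₁]
  have hPmax0 : 0 < Pmax := (div_pos_iff_of_pos_left two_pos).1 (hη.trans hη₂)
  have hηP : ∀ p ∈ region (2 * d * lam), η * cubic (2 * d * lam) p.1 p.2 ≤ 2 := by
    intro p hp
    have hpP : cubic (2 * d * lam) p.1 p.2 ≤ Pmax := hPmax.2 ⟨p, hp, rfl⟩
    nlinarith [mul_le_mul_of_nonneg_left hpP hη.le, (lt_div_iff₀ hPmax0).1 hη₂]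
  have hR := orbit_mem_region hc hη.le hSstarroot hηSstar hℓpos hℓroot hηP hx0 hS0 hx hS
  obtain ⟨a, b, ha, hb, hab, hx_lim, hS_lim⟩ :=
    exists_root_limit_of_orbit_mem_region hc hη hSstarroot hR hx hS
  exact ⟨b, hb, hS_lim, hℓuniq b hb a ha hab ▸ hx_lim⟩

/-- Under the step-size bound, the increasing bounded sequence `(S_t)` converges to
some `S_∞ ≥ 0`, and `(x_t)` converges to `ℓ_{S_∞}`, the unique positive root of
`P(·, S_∞)`, where `P(x, S) = 2dλ − x³ + xS`. -/
theorem stmt_13 (lam d η : ℝ) (hlam : 0 < lam) (hd : 0 < d) (hη : 0 < η)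
    (Sstar : ℝ) (hSstar : 0 < Sstar)
    (hSstarroot : 2 * d * lam - Sstar ^ 3 + Sstar * Sstar = 0)
    (hSstaruniq : ∀ z, 0 < z → 2 * d * lam - z ^ 3 + z * z = 0 → z = Sstar)
    (Pmax : ℝ)
    (hPmax : IsGreatest ((fun p : ℝ × ℝ => 2 * d * lam - p.1 ^ 3 + p.1 * p.2) ''
      {p : ℝ × ℝ | 0 ≤ p.1 ∧ 0 ≤ p.2 ∧ p.2 ≤ p.1 ∧
        0 ≤ 2 * d * lam - p.1 ^ 3 + p.1 * p.2}) Pmax)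
    (hηbound : η < min (2 / (3 * (Sstar + 1) ^ 2)) (2 / Pmax))
    (ℓ : ℝ → ℝ)
    (hℓpos : ∀ s, 0 ≤ s → 0 < ℓ s)
    (hℓroot : ∀ s, 0 ≤ s → 2 * d * lam - (ℓ s) ^ 3 + ℓ s * s = 0)
    (hℓuniq : ∀ s, 0 ≤ s → ∀ z, 0 < z → 2 * d * lam - z ^ 3 + z * s = 0 → z = ℓ s)
    (x S : ℕ → ℝ) (hx0 : x 0 = 0) (hS0 : S 0 = 0)
    (hx : ∀ t, x (t + 1) = x t + (η / 2) * (2 * d * lam - (x t) ^ 3 + x t * S t))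
    (hS : ∀ t, S (t + 1) = S t + (η ^ 2 / 4) * (2 * d * lam - (x t) ^ 3 + x t * S t) ^ 2) :
    ∃ Sinf : ℝ, 0 ≤ Sinf ∧ Filter.Tendsto S Filter.atTop (nhds Sinf) ∧
      Filter.Tendsto x Filter.atTop (nhds (ℓ Sinf)) :=
  stmt_13_general lam d η hlam hd hη Sstar hSstarroot Pmax hPmax hηbound ℓ hℓpos hℓroot hℓuniq x S
    hx0 hS0 hx hS
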